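/- Let a > 0, β > 0 and 0 ≤ e < 1. The average over the mean anomaly of v²/r = β(2/r − 1/a)/r along a Kepler ellipse of semi-major axis a and eccentricity e equals (β/a²)(2/√(1 − e²) − 1); explicitly, (1/(2π)) ∫₀^{2π} β(2/(a(1 − e·cos E)) − 1/a)·(1/(a(1 − e·cos E)))·(1 − e·cos E) dE = (β/a²)(2/√(1 − e²) − 1). -/

import Mathlib

/-!
Substituting `r = a(1 - e cos E)` turns the average into
`(β/a²) · ((2/2π) ∫₀^{2π} dE/(1 - e cos E) - 1)`, so everything rests on
`∫₀^{2π} dE/(1 - e cos E) = 2π/√(1 - e²)`. That integral is evaluated through the true anomaly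
`ν(E)`, whose derivative in the eccentric anomaly is `√(1 - e²)/(1 - e cos E)` and which
advances by exactly `2π` over one revolution.
-/

open Real

lemma one_sub_mul_cos_pos {e : ℝ} (he : |e| < 1) (x : ℝ) : 0 < 1 - e * cos x := by
  have : |e * cos x| < 1 := by
    rw [abs_mul]
    nlinarith [abs_cos_le_one x, abs_nonneg e, abs_nonneg (cos x)]
  linarith [le_abs_self (e * cos x)]

lemma one_sub_sq_pos {e : ℝ} (he : |e| < 1) : 0 < 1 - e ^ 2 :=
  sub_pos.mpr ((sq_lt_one_iff_abs_lt_one e).mpr he)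

/-- The classical formula `ν = E + 2 arctan (β sin E / (1 - β cos E))`, `β = e/(1 + √(1 - e²))`,
for the true anomaly, continuous in the eccentric anomaly `E`. -/
noncomputable def trueAnomaly (e E : ℝ) : ℝ :=
  E + 2 * arctan (e * sin E / (1 + √(1 - e ^ 2) - e * cos E))

lemma hasDerivAt_trueAnomaly {e : ℝ} (he : |e| < 1) (E : ℝ) :
    HasDerivAt (trueAnomaly e) (√(1 - e ^ 2) / (1 - e * cos E)) E := by
  set s := √(1 - e ^ 2)
  set c := cos E
  have hs : s ^ 2 = 1 - e ^ 2 := sq_sqrt (one_sub_sq_pos he).le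
  have hs0 : 0 ≤ s := sqrt_nonneg _
  have hpos : 0 < 1 - e * c := one_sub_mul_cos_pos he E
  have hD : 0 < 1 + s - e * c := by linarith
  have hsin : sin E ^ 2 = 1 - c ^ 2 := sin_sq E
  have hquot : HasDerivAt (fun x => e * sin x / (1 + s - e * cos x))
      ((e * c * (1 + s - e * c) - e * sin E * (e * sin E)) / (1 + s - e * c) ^ 2) E := by
    have hden : HasDerivAt (fun x => 1 + s - e * cos x) (e * sin E) E := by
      simpa using ((hasDerivAt_cos E).const_mul e).const_sub (1 + s)
    exact ((hasDerivAt_sin E).const_mul e).div hden hD.ne'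
  refine ((hasDerivAt_id E).add (hquot.arctan.const_mul 2)).congr_deriv ?_
  -- For `u = e sin E / D`, `D = 1 + s - e c`: `1 + u² = 2(1 + s)(1 - e c)/D²` and the
  -- numerator of `u'` is `(1 + s)(s - (1 - e c))`, both because `e² = (1 - s)(1 + s)`.
  have hone_add_sq : 1 + (e * sin E / (1 + s - e * c)) ^ 2
      = 2 * (1 + s) * (1 - e * c) / (1 + s - e * c) ^ 2 := by
    field_simp
    linear_combination e ^ 2 * hsin + hs
  have hnum : e * c * (1 + s - e * c) - e * sin E * (e * sin E)
      = (1 + s) * (s - (1 - e * c)) := by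
    linear_combination (-e ^ 2) * hsin - hs
  rw [hone_add_sq, hnum]
  field_simp
  ring

lemma integral_one_div_one_sub_mul_cos {e : ℝ} (he : |e| < 1) :
    ∫ x in (0 : ℝ)..(2 * π), 1 / (1 - e * cos x) = 2 * π / √(1 - e ^ 2) := by
  have hpos := one_sub_mul_cos_pos he
  have hs : 0 < √(1 - e ^ 2) := sqrt_pos.mpr (one_sub_sq_pos he)
  have hcont : Continuous fun x => √(1 - e ^ 2) / (1 - e * cos x) :=
    continuous_const.div (by fun_prop) fun x => (hpos x).ne'
  have hν : ∫ x in (0 : ℝ)..(2 * π), √(1 - e ^ 2) / (1 - e * cos x) = 2 * π := by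
    rw [intervalIntegral.integral_eq_sub_of_hasDerivAt (fun x _ => hasDerivAt_trueAnomaly he x)
      (hcont.intervalIntegrable _ _)]
    simp [trueAnomaly]
  calc ∫ x in (0 : ℝ)..(2 * π), 1 / (1 - e * cos x)
      = ∫ x in (0 : ℝ)..(2 * π), √(1 - e ^ 2) / (1 - e * cos x) / √(1 - e ^ 2) := by
        congr 1 with x
        field_simp
    _ = 2 * π / √(1 - e ^ 2) := by rw [intervalIntegral.integral_div, hν]

theorem kepler_mean_anomaly_average_v_sq_over_r_general (a β e : ℝ)
    (he0 : 0 ≤ e) (he1 : e < 1) :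
    (1 / (2 * π)) * ∫ E in (0:ℝ)..(2 * π),
        β * (2 / (a * (1 - e * Real.cos E)) - 1 / a) * (1 / (a * (1 - e * Real.cos E)))
          * (1 - e * Real.cos E) =
      (β / a ^ 2) * (2 / Real.sqrt (1 - e ^ 2) - 1) := by
  have he : |e| < 1 := abs_lt.mpr ⟨by linarith, he1⟩
  have hpos := one_sub_mul_cos_pos he
  have hintegrand : ∀ E, β * (2 / (a * (1 - e * cos E)) - 1 / a) * (1 / (a * (1 - e * cos E)))
      * (1 - e * cos E) = 2 * (β / a ^ 2) * (1 / (1 - e * cos E)) - β / a ^ 2 := by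
    intro E
    have := (hpos E).ne'
    rcases eq_or_ne a 0 with rfl | ha
    · simp -- both sides are `0` through the junk value `x / 0 = 0`
    · field_simp
  have hcont : Continuous fun E => 2 * (β / a ^ 2) * (1 / (1 - e * cos E)) :=
    continuous_const.mul (continuous_const.div (by fun_prop) fun x => (hpos x).ne')
  simp_rw [hintegrand]
  rw [intervalIntegral.integral_sub (hcont.intervalIntegrable _ _) intervalIntegrable_const,
    intervalIntegral.integral_const_mul, integral_one_div_one_sub_mul_cos he,
    intervalIntegral.integral_const, sub_zero, smul_eq_mul]
  field_simp [pi_ne_zero]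

/-- Let `a > 0`, `β > 0` and `0 ≤ e < 1`. The average over the mean anomaly of
`v²/r = β(2/r − 1/a)/r` along a Kepler ellipse of semi-major axis `a` and eccentricity `e`
equals `(β/a²)(2/√(1 − e²) − 1)`:
`(1/(2π)) ∫₀^{2π} β(2/(a(1 − e·cos E)) − 1/a)·(1/(a(1 − e·cos E)))·(1 − e·cos E) dE
  = (β/a²)(2/√(1 − e²) − 1)`. -/
theorem kepler_mean_anomaly_average_v_sq_over_r (a β e : ℝ) (ha : 0 < a) (hβ : 0 < β)
    (he0 : 0 ≤ e) (he1 : e < 1) :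
    (1 / (2 * π)) * ∫ E in (0:ℝ)..(2 * π),
        β * (2 / (a * (1 - e * Real.cos E)) - 1 / a) * (1 / (a * (1 - e * Real.cos E)))
          * (1 - e * Real.cos E) =
      (β / a ^ 2) * (2 / Real.sqrt (1 - e ^ 2) - 1) :=
  kepler_mean_anomaly_average_v_sq_over_r_general a β e he0 he1
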